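/- arXiv:1506.05900 — 8 statements merged into one kernel-verified Lean document; each statement's English description precedes it below -/
import Mathlib

section
/- For every nonempty finite set X, every integer k ≥ 1, every k-clustering C of X all of whose clusters are nonempty, and every integer d ≥ 1, there exists a mapping g : X → ℝ^d such that COST_X(g, C) = 0 and every k-clustering C' of X with COST_X(g, C') = 0 satisfies Δ_X(C, C') = 0; in particular, C is, up to a permutation of the cluster indices, the unique minimizer of the k-means cost of X under g. -/
open scoped BigOperators symmDiff

noncomputable section

/-- Euclidean space `ℝ^n`. -/
abbrev Euc (n : ℕ) : Type := EuclideanSpace ℝ (Fin n)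

variable {X : Type*} [Fintype X] [DecidableEq X] {n k : ℕ}

/-- `C` is a `k`-clustering of `X`: an ordered tuple of pairwise disjoint subsets covering `X`. -/
def IsClustering (k : ℕ) (C : Fin k → Finset X) : Prop :=
  (∀ i j, i ≠ j → Disjoint (C i) (C j)) ∧ Finset.univ.biUnion C = Finset.univ

/-- Sample-based clustering difference `Δ_S`. -/
def clusterDiffOn (k : ℕ) (S : Finset X) (C₁ C₂ : Fin k → Finset X) : ℝ :=
  ⨅ σ : Equiv.Perm (Fin k),
    (1 / (S.card : ℝ)) * ∑ i, (((C₁ i ∩ S) ∆ (C₂ (σ i) ∩ S)).card : ℝ)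

/-- Clustering difference `Δ_X`. -/
def clusterDiff (k : ℕ) (C₁ C₂ : Fin k → Finset X) : ℝ :=
  clusterDiffOn k Finset.univ C₁ C₂

/-- k-means cost of `X` under mapping `f` with a `k`-tuple of centers `μ`. -/
def costCenters (k : ℕ) (f : X → Euc n) (μ : Fin k → Euc n) : ℝ :=
  (1 / (Fintype.card X : ℝ)) * ∑ x, ⨅ j : Fin k, ‖f x - μ j‖ ^ 2

/-- k-means cost of a clustering `C` under `f`, with per-cluster optimal centers. -/
def costClustering (k : ℕ) (f : X → Euc n) (C : Fin k → Finset X) : ℝ :=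
  (1 / (Fintype.card X : ℝ)) * ∑ i, ⨅ μ : Euc n, ∑ x ∈ C i, ‖f x - μ‖ ^ 2

/-- Index of a nearest center to `f x`, ties broken by smallest index. -/
def nearestIdx [NeZero k] (f : X → Euc n) (μ : Fin k → Euc n) (x : X) : Fin k :=
  (Finset.univ.filter fun j => ∀ l, ‖f x - μ j‖ ≤ ‖f x - μ l‖).min' (by
    have hk : 0 < k := Nat.pos_of_ne_zero (NeZero.ne k)
    obtain ⟨j, -, hj⟩ := Finset.exists_min_image (Finset.univ : Finset (Fin k))
      (fun j => ‖f x - μ j‖) ⟨⟨0, hk⟩, Finset.mem_univ _⟩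
    exact ⟨j, Finset.mem_filter.mpr ⟨Finset.mem_univ _, fun l => hj l (Finset.mem_univ _)⟩⟩)

/-- The Voronoi `k`-clustering of `X` induced by `(f, μ)`, ties broken by smallest index. -/
def voronoiClustering [NeZero k] (f : X → Euc n) (μ : Fin k → Euc n) : Fin k → Finset X :=
  fun i => Finset.univ.filter fun x => nearestIdx f μ x = i

/-- `f` has a unique optimal k-means clustering `Cf`: minimizers of the center-based cost
exist and all of them induce the same Voronoi clustering, namely `Cf`. -/
def HasUniqueOptClustering [NeZero k] (f : X → Euc n) (Cf : Fin k → Finset X) : Prop :=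
  (∃ μ : Fin k → Euc n, ∀ ν, costCenters k f μ ≤ costCenters k f ν) ∧
  ∀ μ : Fin k → Euc n, (∀ ν, costCenters k f μ ≤ costCenters k f ν) →
    voronoiClustering f μ = Cf

/-- `f` has an `(η, ε)`-unique k-means solution on `X`, with optimal clustering `Cf`. -/
def HasUniqueSolution [NeZero k] (f : X → Euc n) (Cf : Fin k → Finset X) (η ε : ℝ) : Prop :=
  HasUniqueOptClustering f Cf ∧
  ∀ P : Fin k → Finset X, IsClustering k P →
    costClustering k f P < costClustering k f Cf + η → clusterDiff k Cf P < ε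

/-- `L₁` distance `d_{L1}^X` between two functions on `X`. -/
def dL1 {E : Type*} [SeminormedAddGroup E] (f g : X → E) : ℝ :=
  (1 / (Fintype.card X : ℝ)) * ∑ x, ‖f x - g x‖

/-- The indicator function `h_σ^{f₁,f₂}` of `∪_i (C¹_i Δ C²_{σ(i)})`. -/
def indSymmDiff (C₁ C₂ : Fin k → Finset X) (σ : Equiv.Perm (Fin k)) : X → ℝ :=
  fun x => if x ∈ Finset.univ.biUnion (fun i => C₁ i ∆ C₂ (σ i)) then 1 else 0

/-- The class `H^F`, where `Cf f` is the optimal clustering of `f`. -/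
def HF (F : Set (X → Euc n)) (Cf : (X → Euc n) → Fin k → Finset X) : Set (X → ℝ) :=
  {h | ∃ f₁ ∈ F, ∃ f₂ ∈ F, ∃ σ : Equiv.Perm (Fin k), h = indSymmDiff (Cf f₁) (Cf f₂) σ}

/-- Internal covering number `N(G, d, r)`. -/
def coveringNumber {α : Type*} (G : Set α) (d : α → α → ℝ) (r : ℝ) : ℕ :=
  sInf {m : ℕ | ∃ T : Finset α, ↑T ⊆ G ∧ T.card = m ∧ ∀ g ∈ G, ∃ t ∈ T, d g t ≤ r}

/-- External covering number `N_ext(G, d, r)`. -/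
def extCoveringNumber {α : Type*} (G : Set α) (d : α → α → ℝ) (r : ℝ) : ℕ :=
  sInf {m : ℕ | ∃ T : Finset α, T.card = m ∧ ∀ g ∈ G, ∃ t ∈ T, d g t ≤ r}

/-- `G` pseudo-shatters the finite set `S`. -/
def PseudoShatters (G : Set (X → ℝ)) (S : Finset X) : Prop :=
  ∃ r : X → ℝ, ∀ b : X → Bool, ∃ g ∈ G, ∀ x ∈ S, (r x < g x ↔ b x = true)

/-- Pseudo-dimension of a class of real-valued functions. -/
def pdim (G : Set (X → ℝ)) : ℕ :=
  sSup {m : ℕ | ∃ S : Finset X, S.card = m ∧ PseudoShatters G S}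

/-- The class of `i`-th coordinate functions of members of `F`. -/
def coordClass (F : Set (X → Euc n)) (i : Fin n) : Set (X → ℝ) :=
  {g | ∃ f ∈ F, g = fun x => f x i}

/-- Vector-valued pseudo-dimension `Pdim(F) = n · max_i Pdim(F_i)`. -/
def vPdim (n : ℕ) (F : Set (X → Euc n)) : ℕ :=
  n * Finset.univ.sup fun i : Fin n => pdim (coordClass F i)

/-!
Send every point of the `i`-th cluster of `C` to the `i`-th of `k` distinct points of `ℝ^d`
(they exist as soon as `d ≥ 1`). Then `C` has cost zero. A clustering has cost zero exactly
when the image is constant on each of its clusters, so any zero-cost `C'` refines `C`; since `C`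
has `k` nonempty clusters and `C'` only `k` clusters, the refinement is a relabelling of `C`.
-/

theorem iInf_sum_norm_sub_sq_eq_zero_iff {α E : Type*} [NormedAddCommGroup E] (f : α → E)
    (s : Finset α) :
    (⨅ μ : E, ∑ x ∈ s, ‖f x - μ‖ ^ 2) = 0 ↔ ∀ x ∈ s, ∀ y ∈ s, f x = f y := by
  have hbdd : BddBelow (Set.range fun μ : E => ∑ x ∈ s, ‖f x - μ‖ ^ 2) :=
    ⟨0, by rintro _ ⟨μ, rfl⟩; positivity⟩
  constructor
  · intro h x hx y hy
    have hle : ‖f x - f y‖ ^ 2 / 4 ≤ ⨅ μ : E, ∑ z ∈ s, ‖f z - μ‖ ^ 2 := le_ciInf fun μ => by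
      have htri := norm_sub_le_norm_sub_add_norm_sub (f x) μ (f y)
      rw [norm_sub_rev μ] at htri
      have hx' := Finset.single_le_sum (fun z _ => sq_nonneg ‖f z - μ‖) hx
      have hy' := Finset.single_le_sum (fun z _ => sq_nonneg ‖f z - μ‖) hy
      -- `‖f x - f y‖² ≤ 2 (‖f x - μ‖² + ‖f y - μ‖²)`, and each summand is at most the sum
      have hsq := pow_le_pow_left₀ (norm_nonneg _) htri 2
      nlinarith [sq_nonneg (‖f x - μ‖ - ‖f y - μ‖)]
    rw [h] at hle
    have : ‖f x - f y‖ = 0 := by nlinarith [norm_nonneg (f x - f y)]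
    exact sub_eq_zero.mp (norm_eq_zero.mp this)
  · intro h
    obtain ⟨μ, hμ⟩ : ∃ μ, ∀ x ∈ s, f x = μ := by
      rcases s.eq_empty_or_nonempty with rfl | ⟨x₀, hx₀⟩
      · exact ⟨0, by simp⟩
      · exact ⟨f x₀, fun x hx => h x hx x₀ hx₀⟩
    refine le_antisymm ((ciInf_le hbdd μ).trans_eq ?_) (Real.iInf_nonneg fun _ => by positivity)
    exact Finset.sum_eq_zero fun x hx => by simp [hμ x hx]

theorem costClustering_eq_zero_iff {α : Type*} [Fintype α] [Nonempty α] (f : α → Euc n)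
    (C : Fin k → Finset α) :
    costClustering k f C = 0 ↔ ∀ i, ∀ x ∈ C i, ∀ y ∈ C i, f x = f y := by
  have hcard : (1 / (Fintype.card α : ℝ)) ≠ 0 := by positivity
  rw [costClustering, mul_eq_zero, or_iff_right hcard,
    Finset.sum_eq_zero_iff_of_nonneg fun i _ => Real.iInf_nonneg fun μ => by positivity]
  simp only [Finset.mem_univ, true_implies, iInf_sum_norm_sub_sq_eq_zero_iff]

theorem clusterDiffOn_eq_zero_of_perm (S : Finset X) {C₁ C₂ : Fin k → Finset X}
    (σ : Equiv.Perm (Fin k)) (h : ∀ i, C₂ (σ i) = C₁ i) : clusterDiffOn k S C₁ C₂ = 0 := by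
  have hnonneg : ∀ τ : Equiv.Perm (Fin k),
      0 ≤ (1 / (S.card : ℝ)) * ∑ i, (((C₁ i ∩ S) ∆ (C₂ (τ i) ∩ S)).card : ℝ) :=
    fun τ => by positivity
  refine le_antisymm ((ciInf_le ⟨0, ?_⟩ σ).trans_eq ?_) (Real.iInf_nonneg hnonneg)
  · rintro _ ⟨τ, rfl⟩
    exact hnonneg τ
  · simp [h]

namespace IsClustering

variable {C C' : Fin k → Finset X} (hC : IsClustering k C)
include hC

theorem exists_mem (x : X) : ∃ i, x ∈ C i := by
  have hx : x ∈ Finset.univ.biUnion C := hC.2 ▸ Finset.mem_univ x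
  simpa using hx

theorem eq_of_mem {x : X} {i j : Fin k} (hi : x ∈ C i) (hj : x ∈ C j) : i = j := by
  by_contra hij
  exact Finset.disjoint_left.mp (hC.1 i j hij) hi hj

def index (x : X) : Fin k := (hC.exists_mem x).choose

theorem mem_index (x : X) : x ∈ C (hC.index x) := (hC.exists_mem x).choose_spec

theorem index_eq_of_mem {x : X} {i : Fin k} (h : x ∈ C i) : hC.index x = i :=
  hC.eq_of_mem (hC.mem_index x) h

theorem exists_perm_of_refines (hC' : IsClustering k C') (hne : ∀ i, (C i).Nonempty)
    (hsub : ∀ j, ∃ i, C' j ⊆ C i) : ∃ σ : Equiv.Perm (Fin k), ∀ j, C' j = C (σ j) := by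
  choose τ hτ using hsub
  have hsurj : Function.Surjective τ := fun i => by
    obtain ⟨x, hx⟩ := hne i
    obtain ⟨j, hj⟩ := hC'.exists_mem x
    exact ⟨j, hC.eq_of_mem (hτ j hj) hx⟩
  have hbij : Function.Bijective τ := ⟨Finite.injective_iff_surjective.mpr hsurj, hsurj⟩
  refine ⟨Equiv.ofBijective τ hbij, fun j => (hτ j).antisymm fun x hx => ?_⟩
  obtain ⟨j', hj'⟩ := hC'.exists_mem x
  rwa [← hbij.1 (hC.eq_of_mem (hτ j' hj') hx)]

end IsClustering

theorem richness_of_kmeans_general (X : Type*) [Fintype X] [DecidableEq X] [Nonempty X]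
    (k : ℕ) (C : Fin k → Finset X) (hC : IsClustering k C)
    (hCne : ∀ i, (C i).Nonempty) (d : ℕ) (hd : 1 ≤ d) :
    ∃ g : X → Euc d,
      costClustering k g C = 0 ∧
      ∀ C' : Fin k → Finset X, IsClustering k C' → costClustering k g C' = 0 →
        clusterDiff k C C' = 0 := by
  have : Nonempty (Fin d) := ⟨⟨0, hd⟩⟩
  let e : Fin k ↪ Euc d := Fin.valEmbedding.trans (Infinite.natEmbedding _)
  refine ⟨e ∘ hC.index, ?_, fun C' hC' hcost => ?_⟩
  · rw [costClustering_eq_zero_iff]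
    intro i x hx y hy
    simp [hC.index_eq_of_mem hx, hC.index_eq_of_mem hy]
  · rw [costClustering_eq_zero_iff] at hcost
    have hrefines : ∀ j, ∃ i, C' j ⊆ C i := fun j => by
      rcases (C' j).eq_empty_or_nonempty with h | ⟨x, hx⟩
      · exact ⟨j, by simp [h]⟩
      · refine ⟨hC.index x, fun y hy => ?_⟩
        rw [← e.injective (hcost j y hy x hx)]
        exact hC.mem_index y
    obtain ⟨σ, hσ⟩ := hC.exists_perm_of_refines hC' hCne hrefines
    exact clusterDiffOn_eq_zero_of_perm _ σ.symm fun i => by simp [hσ]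

/-- k-richness. For every nonempty finite `X`, `k ≥ 1`, k-clustering `C` of `X`
with nonempty clusters, and `d ≥ 1`, there is `g : X → ℝ^d` with `COST_X(g, C) = 0`, and every
k-clustering `C'` with `COST_X(g, C') = 0` satisfies `Δ_X(C, C') = 0`. -/
theorem richness_of_kmeans (X : Type*) [Fintype X] [DecidableEq X] [Nonempty X]
    (k : ℕ) (hk : 1 ≤ k) (C : Fin k → Finset X) (hC : IsClustering k C)
    (hCne : ∀ i, (C i).Nonempty) (d : ℕ) (hd : 1 ≤ d) :
    ∃ g : X → Euc d,
      costClustering k g C = 0 ∧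
      ∀ C' : Fin k → Finset X, IsClustering k C' → costClustering k g C' = 0 →
        clusterDiff k C C' = 0 :=
  richness_of_kmeans_general X k C hC hCne d hd
end
end

section
/- Let f₁, f₂ : X → B be mappings into the closed unit ball B of ℝⁿ, each having an (η, ε)-unique k-means solution on X. If d_{L1}^X(f₁, f₂) < η/12, then Δ_X(C^{f₁}_X, C^{f₂}_X) < 2ε. -/
open scoped BigOperators symmDiff

noncomputable section

variable {X : Type*} [Fintype X] [DecidableEq X] {n k : ℕ}

/-
Perturbing the map by `δ` in `L₁` changes the cost of any fixed clustering by at most `4δ`, since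
the optimal centers may be taken in the unit ball, where `‖a - μ‖² - ‖b - μ‖² ≤ 4‖a - b‖`.
Hence `cost_{f₁}(C²) ≤ cost_{f₂}(C²) + 4δ ≤ cost_{f₂}(C¹) + 4δ ≤ cost_{f₁}(C¹) + 8δ`, and
`8δ < η` makes `C²` an `η`-near-optimal clustering for `f₁`, so `Δ(C¹, C²) < ε`.
-/

open Finset

theorem exists_mem_forall_norm_sub_le {E : Type*} [NormedAddCommGroup E]
    [InnerProductSpace ℝ E] {K : Set E} (hne : K.Nonempty) (hc : IsComplete K)
    (hK : Convex ℝ K) (u : E) : ∃ v ∈ K, ∀ w ∈ K, ‖w - v‖ ≤ ‖w - u‖ := by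
  obtain ⟨v, hvK, hv⟩ := exists_norm_eq_iInf_of_complete_convex hne hc hK u
  refine ⟨v, hvK, fun w hw => ?_⟩
  have hinner : inner ℝ (u - v) (w - v) ≤ 0 :=
    (norm_eq_iInf_iff_real_inner_le_zero hK hvK).1 hv w hw
  have hexpand : ‖w - u‖ ^ 2 = ‖w - v‖ ^ 2 - 2 * inner ℝ (u - v) (w - v) + ‖u - v‖ ^ 2 := by
    rw [← real_inner_comm, ← norm_sub_sq_real, sub_sub_sub_cancel_right]
  have hsq : ‖w - v‖ ^ 2 ≤ ‖w - u‖ ^ 2 := by nlinarith [sq_nonneg ‖u - v‖]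
  exact le_of_pow_le_pow_left₀ two_ne_zero (norm_nonneg _) hsq

theorem sq_norm_sub_le_sq_norm_sub_add {E : Type*} [SeminormedAddCommGroup E] {a b μ : E}
    (ha : ‖a‖ ≤ 1) (hb : ‖b‖ ≤ 1) (hμ : ‖μ‖ ≤ 1) :
    ‖a - μ‖ ^ 2 ≤ ‖b - μ‖ ^ 2 + 4 * ‖a - b‖ := by
  have htri : ‖a - μ‖ ≤ ‖a - b‖ + ‖b - μ‖ := norm_sub_le_norm_sub_add_norm_sub a b μ
  have haμ : ‖a - μ‖ ≤ 2 := (norm_sub_le a μ).trans (by linarith)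
  have hbμ : ‖b - μ‖ ≤ 2 := (norm_sub_le b μ).trans (by linarith)
  nlinarith [norm_nonneg (a - μ), norm_nonneg (b - μ), norm_nonneg (a - b)]

theorem iInf_sum_sq_norm_sub_le_add {ι E : Type*} [NormedAddCommGroup E]
    [InnerProductSpace ℝ E] [CompleteSpace E] (s : Finset ι) {f g : ι → E} (hf : ∀ x, ‖f x‖ ≤ 1)
    (hg : ∀ x, ‖g x‖ ≤ 1) :
    (⨅ μ : E, ∑ x ∈ s, ‖f x - μ‖ ^ 2) ≤
      (⨅ μ : E, ∑ x ∈ s, ‖g x - μ‖ ^ 2) + 4 * ∑ x ∈ s, ‖f x - g x‖ := by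
  rw [← sub_le_iff_le_add]
  refine le_ciInf fun μ => sub_le_iff_le_add.2 ?_
  obtain ⟨μ', hμ', hcloser⟩ := exists_mem_forall_norm_sub_le ⟨0, Metric.mem_closedBall_self
    zero_le_one⟩ Metric.isClosed_closedBall.isComplete (convex_closedBall (0 : E) 1) μ
  rw [mem_closedBall_zero_iff] at hμ'
  have hbdd : BddBelow (Set.range fun ν : E => ∑ x ∈ s, ‖f x - ν‖ ^ 2) :=
    ⟨0, Set.forall_mem_range.2 fun ν => by positivity⟩
  calc ⨅ ν : E, ∑ x ∈ s, ‖f x - ν‖ ^ 2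
      ≤ ∑ x ∈ s, ‖f x - μ'‖ ^ 2 := ciInf_le hbdd μ'
    _ ≤ ∑ x ∈ s, (‖g x - μ'‖ ^ 2 + 4 * ‖f x - g x‖) :=
        sum_le_sum fun x _ => sq_norm_sub_le_sq_norm_sub_add (hf x) (hg x) hμ'
    _ ≤ ∑ x ∈ s, (‖g x - μ‖ ^ 2 + 4 * ‖f x - g x‖) := by
        gcongr with x
        exact hcloser _ (mem_closedBall_zero_iff.2 (hg x))
    _ = ∑ x ∈ s, ‖g x - μ‖ ^ 2 + 4 * ∑ x ∈ s, ‖f x - g x‖ := by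
        rw [sum_add_distrib, mul_sum]

theorem exists_sum_lt_sum_iInf_add {ι α : Type*} [Fintype ι] [Nonempty α] (h : ι → α → ℝ)
    {δ : ℝ} (hδ : 0 < δ) : ∃ ν : ι → α, ∑ i, h i (ν i) < (∑ i, ⨅ a, h i a) + δ := by
  set c := δ / (Fintype.card ι + 1)
  have hc : 0 < c := by positivity
  choose ν hν using fun i => exists_lt_of_ciInf_lt (lt_add_of_pos_right (⨅ a, h i a) hc)
  refine ⟨ν, ?_⟩
  have hcard : Fintype.card ι * c < δ := by
    rw [mul_div_assoc', div_lt_iff₀ (by positivity)]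
    linarith
  calc ∑ i, h i (ν i) ≤ ∑ i, ((⨅ a, h i a) + c) := sum_le_sum fun i _ => (hν i).le
    _ = (∑ i, ⨅ a, h i a) + Fintype.card ι * c := by
        rw [sum_add_distrib, sum_const, card_univ, nsmul_eq_mul]
    _ < (∑ i, ⨅ a, h i a) + δ := by linarith

theorem IsClustering.sum_sum_eq {C : Fin k → Finset X} (hC : IsClustering k C) {M : Type*}
    [AddCommMonoid M] (h : X → M) : ∑ i, ∑ x ∈ C i, h x = ∑ x, h x := by
  rw [← sum_biUnion fun i _ j _ hij => hC.1 i j hij, hC.2]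

theorem dL1_nonneg {X E : Type*} [Fintype X] [SeminormedAddGroup E] (f g : X → E) :
    0 ≤ dL1 f g := by
  unfold dL1
  positivity

theorem dL1_comm {X E : Type*} [Fintype X] [SeminormedAddGroup E] (f g : X → E) :
    dL1 f g = dL1 g f := by
  simp only [dL1, norm_sub_rev]

theorem clusterDiff_nonneg (C₁ C₂ : Fin k → Finset X) : 0 ≤ clusterDiff k C₁ C₂ :=
  Real.iInf_nonneg fun _ => by positivity

theorem costClustering_le_add_dL1 {f g : X → Euc n} (hf : ∀ x, ‖f x‖ ≤ 1)
    (hg : ∀ x, ‖g x‖ ≤ 1) {C : Fin k → Finset X} (hC : IsClustering k C) :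
    costClustering k f C ≤ costClustering k g C + 4 * dL1 f g := by
  unfold costClustering dL1
  calc 1 / (Fintype.card X : ℝ) * ∑ i, ⨅ μ : Euc n, ∑ x ∈ C i, ‖f x - μ‖ ^ 2
      ≤ 1 / (Fintype.card X : ℝ) * ∑ i, ((⨅ μ : Euc n, ∑ x ∈ C i, ‖g x - μ‖ ^ 2) +
          4 * ∑ x ∈ C i, ‖f x - g x‖) := by
        gcongr with i
        exact iInf_sum_sq_norm_sub_le_add (C i) hf hg
    _ = _ := by
        rw [sum_add_distrib, ← mul_sum, hC.sum_sum_eq]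
        ring

theorem exists_costCenters_lt [Nonempty X] (f : X → Euc n) {P : Fin k → Finset X}
    (hP : IsClustering k P) {δ : ℝ} (hδ : 0 < δ) :
    ∃ ν : Fin k → Euc n, costCenters k f ν < costClustering k f P + δ := by
  have hN : (0 : ℝ) < Fintype.card X := by exact_mod_cast Fintype.card_pos
  obtain ⟨ν, hν⟩ := exists_sum_lt_sum_iInf_add (fun i μ => ∑ x ∈ P i, ‖f x - μ‖ ^ 2)
    (mul_pos hδ hN)
  refine ⟨ν, ?_⟩
  have hcenters : ∑ x, ⨅ j, ‖f x - ν j‖ ^ 2 ≤ ∑ i, ∑ x ∈ P i, ‖f x - ν i‖ ^ 2 := by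
    rw [← hP.sum_sum_eq]
    exact sum_le_sum fun i _ => sum_le_sum fun x _ => ciInf_le (Set.finite_range _).bddBelow i
  unfold costCenters costClustering
  rw [one_div_mul_eq_div, one_div_mul_eq_div, div_add' _ _ _ hN.ne',
    div_lt_div_iff_of_pos_right hN]
  linarith

section Voronoi

variable [NeZero k]

theorem norm_sub_nearestIdx_le {X : Type*} (f : X → Euc n) (μ : Fin k → Euc n) (x : X)
    (j : Fin k) :
    ‖f x - μ (nearestIdx f μ x)‖ ≤ ‖f x - μ j‖ :=
  (mem_filter.1 <| min'_mem (univ.filter fun i => ∀ l, ‖f x - μ i‖ ≤ ‖f x - μ l‖) _).2 j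

theorem iInf_sq_norm_sub_eq_nearestIdx {X : Type*} (f : X → Euc n) (μ : Fin k → Euc n)
    (x : X) :
    ⨅ j, ‖f x - μ j‖ ^ 2 = ‖f x - μ (nearestIdx f μ x)‖ ^ 2 :=
  le_antisymm (ciInf_le (Set.finite_range _).bddBelow _)
    (le_ciInf fun j => by gcongr; exact norm_sub_nearestIdx_le f μ x j)

theorem isClustering_voronoiClustering (f : X → Euc n) (μ : Fin k → Euc n) :
    IsClustering k (voronoiClustering f μ) := by
  refine ⟨fun i j hij => disjoint_left.2 fun x hi hj => hij ?_, ?_⟩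
  · simp only [voronoiClustering, mem_filter] at hi hj
    rw [← hi.2, hj.2]
  · ext x
    simp [voronoiClustering]

theorem costClustering_voronoiClustering_le (f : X → Euc n) (μ : Fin k → Euc n) :
    costClustering k f (voronoiClustering f μ) ≤ costCenters k f μ := by
  unfold costClustering costCenters
  gcongr
  calc ∑ i, ⨅ ν : Euc n, ∑ x ∈ voronoiClustering f μ i, ‖f x - ν‖ ^ 2
      ≤ ∑ i, ∑ x ∈ voronoiClustering f μ i, ‖f x - μ i‖ ^ 2 :=
        sum_le_sum fun i _ => ciInf_le ⟨0, Set.forall_mem_range.2 fun _ => by positivity⟩ _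
    _ = ∑ i, ∑ x ∈ voronoiClustering f μ i, ⨅ j, ‖f x - μ j‖ ^ 2 := by
        refine sum_congr rfl fun i _ => sum_congr rfl fun x hx => ?_
        rw [iInf_sq_norm_sub_eq_nearestIdx, (mem_filter.1 hx).2]
    _ = ∑ x, ⨅ j, ‖f x - μ j‖ ^ 2 := (isClustering_voronoiClustering f μ).sum_sum_eq _

end Voronoi

namespace HasUniqueOptClustering

variable [NeZero k] {f : X → Euc n} {Cf : Fin k → Finset X}

theorem isClustering (h : HasUniqueOptClustering f Cf) : IsClustering k Cf := by
  obtain ⟨⟨μ, hμ⟩, huniq⟩ := h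
  rw [← huniq μ hμ]
  exact isClustering_voronoiClustering f μ

theorem costClustering_le [Nonempty X] (h : HasUniqueOptClustering f Cf)
    {P : Fin k → Finset X} (hP : IsClustering k P) :
    costClustering k f Cf ≤ costClustering k f P := by
  obtain ⟨⟨μ, hμ⟩, huniq⟩ := h
  refine le_of_forall_pos_lt_add fun δ hδ => ?_
  obtain ⟨ν, hν⟩ := exists_costCenters_lt f hP hδ
  calc costClustering k f Cf ≤ costCenters k f μ :=
        huniq μ hμ ▸ costClustering_voronoiClustering_le f μ
    _ ≤ costCenters k f ν := hμ ν
    _ < costClustering k f P + δ := hν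

end HasUniqueOptClustering

theorem close_maps_close_clusterings_general (X : Type*) [Fintype X] [DecidableEq X] [Nonempty X]
    (n k : ℕ) [NeZero k] (η ε : ℝ)
    (f₁ f₂ : X → Euc n) (hb₁ : ∀ x, ‖f₁ x‖ ≤ 1) (hb₂ : ∀ x, ‖f₂ x‖ ≤ 1)
    (C₁ C₂ : Fin k → Finset X)
    (h₁ : HasUniqueSolution f₁ C₁ η ε) (h₂ : HasUniqueSolution f₂ C₂ η ε)
    (hd : dL1 f₁ f₂ < η / 12) :
    clusterDiff k C₁ C₂ < 2 * ε := by
  have hC₁ := h₁.1.isClustering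
  have hC₂ := h₂.1.isClustering
  have hnear : costClustering k f₁ C₂ < costClustering k f₁ C₁ + η := by
    have h₁₂ := costClustering_le_add_dL1 hb₁ hb₂ hC₂
    have hopt := h₂.1.costClustering_le hC₁
    have h₂₁ := costClustering_le_add_dL1 hb₂ hb₁ hC₁
    rw [dL1_comm] at h₂₁
    linarith [dL1_nonneg f₁ f₂]
  linarith [h₁.2 C₂ hC₂ hnear, clusterDiff_nonneg C₁ C₂]

/-- L₁-close mappings with (η, ε)-unique solutions have 2ε-close optimal
k-means clusterings. -/
theorem close_maps_close_clusterings (X : Type*) [Fintype X] [DecidableEq X] [Nonempty X]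
    (n k : ℕ) [NeZero k] (η ε : ℝ) (hη : 0 < η) (hε : 0 < ε)
    (f₁ f₂ : X → Euc n) (hb₁ : ∀ x, ‖f₁ x‖ ≤ 1) (hb₂ : ∀ x, ‖f₂ x‖ ≤ 1)
    (C₁ C₂ : Fin k → Finset X)
    (h₁ : HasUniqueSolution f₁ C₁ η ε) (h₂ : HasUniqueSolution f₂ C₂ η ε)
    (hd : dL1 f₁ f₂ < η / 12) :
    clusterDiff k C₁ C₂ < 2 * ε :=
  close_maps_close_clusterings_general X n k η ε f₁ f₂ hb₁ hb₂ C₁ C₂ h₁ h₂ hd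
end
end

section
/- Let f₁, f₂ : X → B be mappings into the closed unit ball B of ℝⁿ and let μ = (μ_1, …, μ_k) be any k-tuple of centers in B. Then |COST_X(f₁, μ) − COST_X(f₂, μ)| ≤ 4 · d_{L1}^X(f₁, f₂). -/
open scoped BigOperators symmDiff

noncomputable section

variable {X : Type*} [Fintype X] [DecidableEq X] {n k : ℕ}

/-- One-sided pointwise bound for the min squared distance. -/
lemma infDist_sq_le {n k : ℕ} [NeZero k] (a b : Euc n) (ha : ‖a‖ ≤ 1) (hb : ‖b‖ ≤ 1)
    (μ : Fin k → Euc n) (hμ : ∀ j, ‖μ j‖ ≤ 1) :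
    (⨅ j : Fin k, ‖a - μ j‖ ^ 2) ≤ (⨅ j : Fin k, ‖b - μ j‖ ^ 2) + 4 * ‖a - b‖ := by
  have bdd1 : BddBelow (Set.range fun j : Fin k => ‖a - μ j‖ ^ 2) :=
    Set.Finite.bddBelow (Set.finite_range _)
  have key : ∀ j : Fin k, ‖a - μ j‖ ^ 2 ≤ ‖b - μ j‖ ^ 2 + 4 * ‖a - b‖ := by
    intro j
    have h1 : ‖a - μ j‖ ≤ ‖a - b‖ + ‖b - μ j‖ := by
      calc ‖a - μ j‖ = ‖(a - b) + (b - μ j)‖ := by rw [sub_add_sub_cancel]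
        _ ≤ ‖a - b‖ + ‖b - μ j‖ := norm_add_le _ _
    have h2 : ‖a - μ j‖ ≤ 2 := le_trans (norm_sub_le _ _) (by linarith [hμ j])
    have h3 : ‖b - μ j‖ ≤ 2 := le_trans (norm_sub_le _ _) (by linarith [hμ j])
    have h4 : (0:ℝ) ≤ ‖a - μ j‖ := norm_nonneg _
    have h5 : (0:ℝ) ≤ ‖b - μ j‖ := norm_nonneg _
    have h6 : (0:ℝ) ≤ ‖a - b‖ := norm_nonneg _
    nlinarith [mul_nonneg (by linarith : (0:ℝ) ≤ ‖a - b‖ - (‖a - μ j‖ - ‖b - μ j‖))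
      (by linarith : (0:ℝ) ≤ ‖a - μ j‖ + ‖b - μ j‖)]
  have : (⨅ j : Fin k, ‖a - μ j‖ ^ 2) - 4 * ‖a - b‖ ≤ ⨅ j : Fin k, ‖b - μ j‖ ^ 2 := by
    apply le_ciInf
    intro j
    have := ciInf_le bdd1 j
    linarith [key j]
  linarith

/-- cost perturbation bound for a fixed tuple of centers in the unit ball. -/
theorem cost_diff_fixed_centers (X : Type*) [Fintype X] [DecidableEq X] [Nonempty X]
    (n k : ℕ) (hn : 1 ≤ n) (hk : 1 ≤ k)
    (f₁ f₂ : X → Euc n) (hb₁ : ∀ x, ‖f₁ x‖ ≤ 1) (hb₂ : ∀ x, ‖f₂ x‖ ≤ 1)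
    (μ : Fin k → Euc n) (hμ : ∀ j, ‖μ j‖ ≤ 1) :
    |costCenters k f₁ μ - costCenters k f₂ μ| ≤ 4 * dL1 f₁ f₂ := by
  haveI : NeZero k := ⟨by omega⟩
  have hN : (0:ℝ) < (Fintype.card X : ℝ) := by
    exact_mod_cast Fintype.card_pos
  have key : ∀ x : X,
      |(⨅ j : Fin k, ‖f₁ x - μ j‖ ^ 2) - ⨅ j : Fin k, ‖f₂ x - μ j‖ ^ 2|
        ≤ 4 * ‖f₁ x - f₂ x‖ := by
    intro x
    rw [abs_sub_le_iff]
    constructor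
    · linarith [infDist_sq_le (f₁ x) (f₂ x) (hb₁ x) (hb₂ x) μ hμ]
    · have h := infDist_sq_le (f₂ x) (f₁ x) (hb₂ x) (hb₁ x) μ hμ
      rw [norm_sub_rev] at h
      linarith
  unfold costCenters dL1
  rw [← mul_sub, ← Finset.sum_sub_distrib, abs_mul, mul_comm (4:ℝ), mul_assoc]
  apply mul_le_mul_of_nonneg_left _ (abs_nonneg _) |>.trans
  · rw [abs_of_pos (by positivity)]
  · calc |∑ x, ((⨅ j : Fin k, ‖f₁ x - μ j‖ ^ 2) - ⨅ j : Fin k, ‖f₂ x - μ j‖ ^ 2)|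
        ≤ ∑ x, |(⨅ j : Fin k, ‖f₁ x - μ j‖ ^ 2) - ⨅ j : Fin k, ‖f₂ x - μ j‖ ^ 2| :=
          Finset.abs_sum_le_sum_abs _ _
      _ ≤ ∑ x, 4 * ‖f₁ x - f₂ x‖ := Finset.sum_le_sum fun x _ => key x
      _ = (∑ x, ‖f₁ x - f₂ x‖) * 4 := by rw [← Finset.mul_sum, mul_comm]
end
end

section
/- Let f₁, f₂ : X → B be mappings into the closed unit ball B of ℝⁿ. Then |min_{μ ∈ B^k} COST_X(f₁, μ) − min_{μ ∈ B^k} COST_X(f₂, μ)| ≤ 4 · d_{L1}^X(f₁, f₂), where the minima are over k-tuples of centers in B. -/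
open scoped BigOperators symmDiff

noncomputable section

variable {X : Type*} [Fintype X] [DecidableEq X] {n k : ℕ}

lemma fin_inf_sub_le {k : ℕ} [NeZero k] (a b : Fin k → ℝ) (c : ℝ)
    (h : ∀ j, |a j - b j| ≤ c) : (⨅ j, a j) - ⨅ j, b j ≤ c := by
  have : (⨅ j, a j) - c ≤ ⨅ j, b j := le_ciInf fun j => by
    have h1 := (abs_sub_le_iff.mp (h j)).1
    have h2 := ciInf_le (Finite.bddBelow_range a) j
    linarith
  linarith

lemma fin_inf_abs_sub {k : ℕ} [NeZero k] (a b : Fin k → ℝ) (c : ℝ)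
    (h : ∀ j, |a j - b j| ≤ c) : |(⨅ j, a j) - ⨅ j, b j| ≤ c :=
  abs_sub_le_iff.mpr ⟨fin_inf_sub_le a b c h,
    fin_inf_sub_le b a c fun j => (abs_sub_comm (b j) (a j)) ▸ h j⟩

lemma cost_diff_le {X : Type*} [Fintype X] [DecidableEq X] [Nonempty X] {n k : ℕ}
    [NeZero k] (f₁ f₂ : X → Euc n) (hb₁ : ∀ x, ‖f₁ x‖ ≤ 1) (hb₂ : ∀ x, ‖f₂ x‖ ≤ 1)
    (μ : Fin k → Euc n) (hμ : ∀ j, ‖μ j‖ ≤ 1) :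
    |costCenters k f₁ μ - costCenters k f₂ μ| ≤ 4 * dL1 f₁ f₂ := by
  have hN : (0:ℝ) < (Fintype.card X : ℝ) := by
    exact_mod_cast Fintype.card_pos
  have hpt : ∀ x : X, |(⨅ j : Fin k, ‖f₁ x - μ j‖ ^ 2) - ⨅ j : Fin k, ‖f₂ x - μ j‖ ^ 2|
      ≤ 4 * ‖f₁ x - f₂ x‖ := by
    intro x
    refine fin_inf_abs_sub _ _ _ fun j => ?_
    set a := ‖f₁ x - μ j‖
    set b := ‖f₂ x - μ j‖
    have ha : a ≤ 2 := (norm_sub_le _ _).trans (by linarith [hb₁ x, hμ j])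
    have hb : b ≤ 2 := (norm_sub_le _ _).trans (by linarith [hb₂ x, hμ j])
    have ha0 : 0 ≤ a := norm_nonneg _
    have hb0 : 0 ≤ b := norm_nonneg _
    have hab : |a - b| ≤ ‖f₁ x - f₂ x‖ := by
      have := abs_norm_sub_norm_le (f₁ x - μ j) (f₂ x - μ j)
      simpa [sub_sub_sub_cancel_right] using this
    have : |a ^ 2 - b ^ 2| = |a + b| * |a - b| := by
      rw [← abs_mul]; ring_nf
    rw [this]
    have h1 : |a + b| ≤ 4 := by rw [abs_of_nonneg (by linarith)]; linarith
    exact mul_le_mul h1 hab (abs_nonneg _) (by norm_num)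
  unfold costCenters dL1
  rw [← mul_sub, ← Finset.sum_sub_distrib, abs_mul, abs_of_nonneg (by positivity)]
  rw [mul_comm (4:ℝ), mul_assoc]
  refine mul_le_mul_of_nonneg_left ?_ (by positivity)
  calc |∑ x, ((⨅ j : Fin k, ‖f₁ x - μ j‖ ^ 2) - ⨅ j : Fin k, ‖f₂ x - μ j‖ ^ 2)|
      ≤ ∑ x, |(⨅ j : Fin k, ‖f₁ x - μ j‖ ^ 2) - ⨅ j : Fin k, ‖f₂ x - μ j‖ ^ 2| :=
        Finset.abs_sum_le_sum_abs _ _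
    _ ≤ ∑ x, 4 * ‖f₁ x - f₂ x‖ := Finset.sum_le_sum fun x _ => hpt x
    _ = (∑ x, ‖f₁ x - f₂ x‖) * 4 := by rw [← Finset.mul_sum, mul_comm]

/-- the optimal k-means costs (centers ranging over tuples in the unit ball)
of two mappings differ by at most `4 d_{L1}^X(f₁, f₂)`. -/
theorem opt_cost_diff (X : Type*) [Fintype X] [DecidableEq X] [Nonempty X]
    (n k : ℕ) (hn : 1 ≤ n) (hk : 1 ≤ k)
    (f₁ f₂ : X → Euc n) (hb₁ : ∀ x, ‖f₁ x‖ ≤ 1) (hb₂ : ∀ x, ‖f₂ x‖ ≤ 1) :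
    |(⨅ μ : {μ : Fin k → Euc n // ∀ j, ‖μ j‖ ≤ 1}, costCenters k f₁ μ.1) -
      (⨅ μ : {μ : Fin k → Euc n // ∀ j, ‖μ j‖ ≤ 1}, costCenters k f₂ μ.1)| ≤
    4 * dL1 f₁ f₂ := by
  have hkz : NeZero k := ⟨Nat.one_le_iff_ne_zero.mp hk⟩
  have hne : Nonempty {μ : Fin k → Euc n // ∀ j, ‖μ j‖ ≤ 1} :=
    ⟨⟨fun _ => 0, fun j => by simp⟩⟩
  have hnn : ∀ (f : X → Euc n) (μ : Fin k → Euc n), 0 ≤ costCenters k f μ := by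
    intro f μ
    unfold costCenters
    refine mul_nonneg (by positivity) (Finset.sum_nonneg fun x _ => ?_)
    exact le_ciInf fun j => by positivity
  have hbdd : ∀ f : X → Euc n,
      BddBelow (Set.range fun μ : {μ : Fin k → Euc n // ∀ j, ‖μ j‖ ≤ 1} =>
        costCenters k f μ.1) :=
    fun f => ⟨0, by rintro _ ⟨μ, rfl⟩; exact hnn f μ.1⟩
  have key : ∀ (g₁ g₂ : X → Euc n), (∀ x, ‖g₁ x‖ ≤ 1) → (∀ x, ‖g₂ x‖ ≤ 1) →
      (⨅ μ : {μ : Fin k → Euc n // ∀ j, ‖μ j‖ ≤ 1}, costCenters k g₁ μ.1) -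
      (⨅ μ : {μ : Fin k → Euc n // ∀ j, ‖μ j‖ ≤ 1}, costCenters k g₂ μ.1) ≤
      4 * dL1 g₁ g₂ := by
    intro g₁ g₂ h₁ h₂
    have : (⨅ μ : {μ : Fin k → Euc n // ∀ j, ‖μ j‖ ≤ 1}, costCenters k g₁ μ.1) -
        4 * dL1 g₁ g₂ ≤
        ⨅ μ : {μ : Fin k → Euc n // ∀ j, ‖μ j‖ ≤ 1}, costCenters k g₂ μ.1 := by
      refine le_ciInf fun μ => ?_
      have h3 := (abs_sub_le_iff.mp (cost_diff_le g₁ g₂ h₁ h₂ μ.1 μ.2)).1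
      have h4 := ciInf_le (hbdd g₁) μ
      linarith
    linarith
  have hd : dL1 f₁ f₂ = dL1 f₂ f₁ := by
    unfold dL1; congr 1; exact Finset.sum_congr rfl fun x _ => by rw [norm_sub_rev]
  exact abs_sub_le_iff.mpr ⟨key f₁ f₂ hb₁ hb₂, hd ▸ key f₂ f₁ hb₂ hb₁⟩
end
end

section
/- Let f₁, f₂ : X → B be mappings into the closed unit ball B of ℝⁿ, and let μ¹ and μ² be k-tuples of centers in B minimizing COST_X(f₁, ·) and COST_X(f₂, ·) over B^k, respectively. Then COST_X(f₁, μ²) − COST_X(f₁, μ¹) ≤ 8 · d_{L1}^X(f₁, f₂). -/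
open scoped BigOperators symmDiff

noncomputable section

variable {X : Type*} [Fintype X] [DecidableEq X] {n k : ℕ}

lemma sq_norm_lip {n : ℕ} (a b μ : Euc n) (ha : ‖a‖ ≤ 1) (hb : ‖b‖ ≤ 1) (hμ : ‖μ‖ ≤ 1) :
    ‖a - μ‖ ^ 2 ≤ ‖b - μ‖ ^ 2 + 4 * ‖a - b‖ := by
  have h1 : ‖a - μ‖ ≤ ‖a - b‖ + ‖b - μ‖ := by
    have : a - μ = (a - b) + (b - μ) := by abel
    rw [this]; exact norm_add_le _ _
  have h2 : ‖a - μ‖ ≤ 2 := le_trans (norm_sub_le _ _) (by linarith)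
  have h3 : ‖b - μ‖ ≤ 2 := le_trans (norm_sub_le _ _) (by linarith)
  nlinarith [norm_nonneg (a - b), norm_nonneg (b - μ), norm_nonneg (a - μ)]

lemma cost_lip {X : Type*} [Fintype X] [Nonempty X] {n k : ℕ} (hk : 1 ≤ k)
    (f g : X → Euc n) (hf : ∀ x, ‖f x‖ ≤ 1) (hg : ∀ x, ‖g x‖ ≤ 1)
    (μ : Fin k → Euc n) (hμ : ∀ j, ‖μ j‖ ≤ 1) :
    costCenters k f μ ≤ costCenters k g μ + 4 * dL1 f g := by
  haveI : Nonempty (Fin k) := Fin.pos_iff_nonempty.mp (by omega)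
  unfold costCenters dL1
  have key : ∀ x : X, (⨅ j : Fin k, ‖f x - μ j‖ ^ 2) ≤
      (⨅ j : Fin k, ‖g x - μ j‖ ^ 2) + 4 * ‖f x - g x‖ := by
    intro x
    obtain ⟨j₀, hj₀⟩ := Finite.exists_min (fun j : Fin k => ‖g x - μ j‖ ^ 2)
    have hbdd : BddBelow (Set.range fun j : Fin k => ‖f x - μ j‖ ^ 2) := by
      refine ⟨0, ?_⟩; rintro y ⟨j, rfl⟩; positivity
    have h1 : (⨅ j : Fin k, ‖f x - μ j‖ ^ 2) ≤ ‖f x - μ j₀‖ ^ 2 := ciInf_le hbdd j₀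
    have h2 : ‖g x - μ j₀‖ ^ 2 ≤ ⨅ j : Fin k, ‖g x - μ j‖ ^ 2 := le_ciInf hj₀
    have h3 := sq_norm_lip (f x) (g x) (μ j₀) (hf x) (hg x) (hμ j₀)
    linarith
  have hsum : (∑ x, ⨅ j : Fin k, ‖f x - μ j‖ ^ 2) ≤
      ∑ x, ((⨅ j : Fin k, ‖g x - μ j‖ ^ 2) + 4 * ‖f x - g x‖) :=
    Finset.sum_le_sum fun x _ => key x
  rw [Finset.sum_add_distrib] at hsum
  have hc : (0:ℝ) ≤ 1 / (Fintype.card X : ℝ) := by positivity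
  calc (1 / (Fintype.card X : ℝ)) * ∑ x, ⨅ j : Fin k, ‖f x - μ j‖ ^ 2
      ≤ (1 / (Fintype.card X : ℝ)) *
        ((∑ x, ⨅ j : Fin k, ‖g x - μ j‖ ^ 2) + ∑ x, 4 * ‖f x - g x‖) :=
        mul_le_mul_of_nonneg_left hsum hc
    _ = (1 / (Fintype.card X : ℝ)) * ∑ x, (⨅ j : Fin k, ‖g x - μ j‖ ^ 2) +
        4 * ((1 / (Fintype.card X : ℝ)) * ∑ x, ‖f x - g x‖) := by
        rw [← Finset.mul_sum]; ring

/-- near-optimality, for `f₁`, of the optimal centers of `f₂`. -/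
theorem swapped_centers_near_optimal (X : Type*) [Fintype X] [DecidableEq X] [Nonempty X]
    (n k : ℕ) (hn : 1 ≤ n) (hk : 1 ≤ k)
    (f₁ f₂ : X → Euc n) (hb₁ : ∀ x, ‖f₁ x‖ ≤ 1) (hb₂ : ∀ x, ‖f₂ x‖ ≤ 1)
    (μ1 μ2 : Fin k → Euc n) (hμ1B : ∀ j, ‖μ1 j‖ ≤ 1) (hμ2B : ∀ j, ‖μ2 j‖ ≤ 1)
    (hμ1 : ∀ ν : Fin k → Euc n, (∀ j, ‖ν j‖ ≤ 1) → costCenters k f₁ μ1 ≤ costCenters k f₁ ν)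
    (hμ2 : ∀ ν : Fin k → Euc n, (∀ j, ‖ν j‖ ≤ 1) → costCenters k f₂ μ2 ≤ costCenters k f₂ ν) :
    costCenters k f₁ μ2 - costCenters k f₁ μ1 ≤ 8 * dL1 f₁ f₂ := by
  have hd : dL1 f₂ f₁ = dL1 f₁ f₂ := by
    unfold dL1; congr 1; exact Finset.sum_congr rfl fun x _ => norm_sub_rev _ _
  have h1 : costCenters k f₁ μ2 ≤ costCenters k f₂ μ2 + 4 * dL1 f₁ f₂ :=
    cost_lip hk f₁ f₂ hb₁ hb₂ μ2 hμ2B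
  have h2 : costCenters k f₂ μ2 ≤ costCenters k f₂ μ1 := hμ2 μ1 hμ1B
  have h3 : costCenters k f₂ μ1 ≤ costCenters k f₁ μ1 + 4 * dL1 f₁ f₂ := by
    have := cost_lip hk f₂ f₁ hb₂ hb₁ μ1 hμ1B
    rwa [hd] at this
  linarith
end
end

section
/- Let f₁, f₂ : X → B be mappings into the closed unit ball B of ℝⁿ, let μ = (μ_1, …, μ_k) be a k-tuple of centers in B, and for each x ∈ X let m_x be a center of μ nearest to f₁(x) (i.e., m_x ∈ argmin_{μ_j} ‖f₁(x) − μ_j‖₂). Then (1/|X|) Σ_{x∈X} ‖f₂(x) − m_x‖₂² ≤ COST_X(f₁, μ) + 6 · d_{L1}^X(f₁, f₂). -/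
open scoped BigOperators symmDiff

noncomputable section

variable {X : Type*} [Fintype X] [DecidableEq X] {n k : ℕ}

/-- cost of `f₂` at nearest centers chosen for `f₁`. -/
theorem cost_at_nearest_centers_of_other_map
    (X : Type*) [Fintype X] [DecidableEq X] [Nonempty X]
    (n k : ℕ) (hn : 1 ≤ n) (hk : 1 ≤ k)
    (f₁ f₂ : X → Euc n) (hb₁ : ∀ x, ‖f₁ x‖ ≤ 1) (hb₂ : ∀ x, ‖f₂ x‖ ≤ 1)
    (μ : Fin k → Euc n) (hμ : ∀ j, ‖μ j‖ ≤ 1)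
    (m : X → Euc n)
    (hm : ∀ x, ∃ j, m x = μ j ∧ ∀ l, ‖f₁ x - m x‖ ≤ ‖f₁ x - μ l‖) :
    (1 / (Fintype.card X : ℝ)) * ∑ x, ‖f₂ x - m x‖ ^ 2 ≤
      costCenters k f₁ μ + 6 * dL1 f₁ f₂ := by
  haveI : Nonempty (Fin k) := ⟨⟨0, hk⟩⟩
  have key : ∀ x, ‖f₂ x - m x‖ ^ 2 ≤
      (⨅ j : Fin k, ‖f₁ x - μ j‖ ^ 2) + 6 * ‖f₁ x - f₂ x‖ := by
    intro x
    obtain ⟨j, hj, hmin⟩ := hm x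
    have ha0 : (0:ℝ) ≤ ‖f₁ x - f₂ x‖ := norm_nonneg _
    have hb0 : (0:ℝ) ≤ ‖f₁ x - m x‖ := norm_nonneg _
    have ha2 : ‖f₁ x - f₂ x‖ ≤ 2 := by
      calc ‖f₁ x - f₂ x‖ ≤ ‖f₁ x‖ + ‖f₂ x‖ := norm_sub_le _ _
        _ ≤ 2 := by linarith [hb₁ x, hb₂ x]
    have hb2 : ‖f₁ x - m x‖ ≤ 2 := by
      calc ‖f₁ x - m x‖ ≤ ‖f₁ x‖ + ‖m x‖ := norm_sub_le _ _
        _ ≤ 2 := by rw [hj]; linarith [hb₁ x, hμ j]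
    have htri : ‖f₂ x - m x‖ ≤ ‖f₁ x - f₂ x‖ + ‖f₁ x - m x‖ := by
      have : f₂ x - m x = -(f₁ x - f₂ x) + (f₁ x - m x) := by abel
      rw [this]
      calc ‖-(f₁ x - f₂ x) + (f₁ x - m x)‖
          ≤ ‖-(f₁ x - f₂ x)‖ + ‖f₁ x - m x‖ := norm_add_le _ _
        _ = ‖f₁ x - f₂ x‖ + ‖f₁ x - m x‖ := by rw [norm_neg]
    have hsq : ‖f₂ x - m x‖ ^ 2 ≤ (‖f₁ x - f₂ x‖ + ‖f₁ x - m x‖) ^ 2 :=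
      pow_le_pow_left₀ (norm_nonneg _) htri 2
    have hbinf : ‖f₁ x - m x‖ ^ 2 ≤ ⨅ l : Fin k, ‖f₁ x - μ l‖ ^ 2 :=
      le_ciInf fun l => pow_le_pow_left₀ hb0 (hmin l) 2
    nlinarith [hsq, hbinf, ha0, hb0, ha2, hb2]
  have hsum : ∑ x, ‖f₂ x - m x‖ ^ 2 ≤
      (∑ x, ⨅ j : Fin k, ‖f₁ x - μ j‖ ^ 2) + 6 * ∑ x, ‖f₁ x - f₂ x‖ := by
    calc ∑ x, ‖f₂ x - m x‖ ^ 2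
        ≤ ∑ x, ((⨅ j : Fin k, ‖f₁ x - μ j‖ ^ 2) + 6 * ‖f₁ x - f₂ x‖) :=
          Finset.sum_le_sum fun x _ => key x
      _ = (∑ x, ⨅ j : Fin k, ‖f₁ x - μ j‖ ^ 2) + 6 * ∑ x, ‖f₁ x - f₂ x‖ := by
          rw [Finset.sum_add_distrib, Finset.mul_sum]
  have hN : (0:ℝ) ≤ 1 / (Fintype.card X : ℝ) := by positivity
  unfold costCenters dL1
  calc (1 / (Fintype.card X : ℝ)) * ∑ x, ‖f₂ x - m x‖ ^ 2
      ≤ (1 / (Fintype.card X : ℝ)) *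
        ((∑ x, ⨅ j : Fin k, ‖f₁ x - μ j‖ ^ 2) + 6 * ∑ x, ‖f₁ x - f₂ x‖) :=
        mul_le_mul_of_nonneg_left hsum hN
    _ = (1 / (Fintype.card X : ℝ)) * (∑ x, ⨅ j : Fin k, ‖f₁ x - μ j‖ ^ 2) +
        6 * ((1 / (Fintype.card X : ℝ)) * ∑ x, ‖f₁ x - f₂ x‖) := by ring
end
end

section
/- Let f₁, f₂ : X → B be mappings into the closed unit ball B of ℝⁿ, and let μ² be a k-tuple of centers in B minimizing COST_X(f₂, ·) over B^k. Let C_{f₁}(μ²) be the Voronoi k-clustering of X obtained by assigning each x ∈ X to a nearest center of μ² with respect to f₁ (ties broken by smallest index). Then COST_X(f₂, C_{f₁}(μ²)) − COST_X(f₂, μ²) ≤ 10 · d_{L1}^X(f₁, f₂), where COST_X(f₂, C) for a k-clustering C uses per-cluster optimal centers. -/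
open scoped BigOperators symmDiff

noncomputable section

variable {X : Type*} [Fintype X] [DecidableEq X] {n k : ℕ}

/-- the Voronoi clustering of `f₂`'s optimal centers computed w.r.t. `f₁`
is near-optimal for `f₂`. -/
theorem voronoi_of_other_map_near_optimal
    (X : Type*) [Fintype X] [DecidableEq X] [Nonempty X]
    (n k : ℕ) (hn : 1 ≤ n) [NeZero k]
    (f₁ f₂ : X → Euc n) (hb₁ : ∀ x, ‖f₁ x‖ ≤ 1) (hb₂ : ∀ x, ‖f₂ x‖ ≤ 1)
    (μ2 : Fin k → Euc n) (hμ2B : ∀ j, ‖μ2 j‖ ≤ 1)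
    (hμ2 : ∀ ν : Fin k → Euc n, (∀ j, ‖ν j‖ ≤ 1) → costCenters k f₂ μ2 ≤ costCenters k f₂ ν) :
    costClustering k f₂ (voronoiClustering f₁ μ2) - costCenters k f₂ μ2 ≤
      10 * dL1 f₁ f₂ := by
  classical
  set g : X → Fin k := nearestIdx f₁ μ2 with hg
  have hnear : ∀ (x : X) (l : Fin k), ‖f₁ x - μ2 (g x)‖ ≤ ‖f₁ x - μ2 l‖ := by
    intro x l
    have hmem : g x ∈ Finset.univ.filter fun j => ∀ l, ‖f₁ x - μ2 j‖ ≤ ‖f₁ x - μ2 l‖ :=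
      Finset.min'_mem _ _
    rw [Finset.mem_filter] at hmem
    exact hmem.2 l
  have tri : ∀ (u v : Euc n) (w : Euc n), ‖u - w‖ ≤ ‖u - v‖ + ‖v - w‖ := by
    intro u v w
    calc ‖u - w‖ = ‖(u - v) + (v - w)‖ := by rw [sub_add_sub_cancel]
      _ ≤ ‖u - v‖ + ‖v - w‖ := norm_add_le _ _
  have key : ∀ x : X, ‖f₂ x - μ2 (g x)‖ ^ 2 ≤
      (⨅ j : Fin k, ‖f₂ x - μ2 j‖ ^ 2) + 10 * ‖f₁ x - f₂ x‖ := by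
    intro x
    obtain ⟨j₀, hj₀⟩ := Finite.exists_min fun j : Fin k => ‖f₂ x - μ2 j‖ ^ 2
    have hinf : (⨅ j : Fin k, ‖f₂ x - μ2 j‖ ^ 2) = ‖f₂ x - μ2 j₀‖ ^ 2 :=
      le_antisymm (ciInf_le (Set.finite_range _).bddBelow _) (le_ciInf hj₀)
    rw [hinf]
    have ha2 : ‖f₂ x - μ2 (g x)‖ ≤ 2 := by
      have := norm_sub_le (f₂ x) (μ2 (g x))
      have := hb₂ x; have := hμ2B (g x); linarith
    have hb2 : ‖f₂ x - μ2 j₀‖ ≤ 2 := by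
      have := norm_sub_le (f₂ x) (μ2 j₀)
      have := hb₂ x; have := hμ2B j₀; linarith
    have habd : ‖f₂ x - μ2 (g x)‖ ≤ ‖f₂ x - μ2 j₀‖ + 2 * ‖f₁ x - f₂ x‖ := by
      have h1 : ‖f₂ x - μ2 (g x)‖ ≤ ‖f₂ x - f₁ x‖ + ‖f₁ x - μ2 (g x)‖ := tri _ _ _
      have h2 : ‖f₁ x - μ2 (g x)‖ ≤ ‖f₁ x - μ2 j₀‖ := hnear x j₀
      have h3 : ‖f₁ x - μ2 j₀‖ ≤ ‖f₁ x - f₂ x‖ + ‖f₂ x - μ2 j₀‖ := tri _ _ _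
      have h4 : ‖f₂ x - f₁ x‖ = ‖f₁ x - f₂ x‖ := norm_sub_rev _ _
      linarith
    have hA : (0:ℝ) ≤ ‖f₂ x - μ2 (g x)‖ := norm_nonneg _
    have hB : (0:ℝ) ≤ ‖f₂ x - μ2 j₀‖ := norm_nonneg _
    have hD : (0:ℝ) ≤ ‖f₁ x - f₂ x‖ := norm_nonneg _
    nlinarith [sq_nonneg (‖f₂ x - μ2 (g x)‖ - ‖f₂ x - μ2 j₀‖),
      mul_nonneg hD hA, mul_nonneg hD hB]
  have hNpos : (0:ℝ) < (Fintype.card X : ℝ) := by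
    exact_mod_cast Fintype.card_pos
  have h1 : costClustering k f₂ (voronoiClustering f₁ μ2) ≤
      (1 / (Fintype.card X : ℝ)) * ∑ i, ∑ x ∈ voronoiClustering f₁ μ2 i, ‖f₂ x - μ2 i‖ ^ 2 := by
    unfold costClustering
    apply mul_le_mul_of_nonneg_left _ (by positivity)
    apply Finset.sum_le_sum
    intro i _
    refine ciInf_le ⟨0, ?_⟩ (μ2 i)
    rintro y ⟨μ, rfl⟩
    positivity
  have h2 : ∑ i, ∑ x ∈ voronoiClustering f₁ μ2 i, ‖f₂ x - μ2 i‖ ^ 2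
      = ∑ x, ‖f₂ x - μ2 (g x)‖ ^ 2 := by
    rw [← Finset.sum_fiberwise Finset.univ g (fun x => ‖f₂ x - μ2 (g x)‖ ^ 2)]
    refine Finset.sum_congr rfl fun i _ => ?_
    refine Finset.sum_congr rfl fun x hx => ?_
    rw [Finset.mem_filter] at hx
    rw [hx.2]
  rw [h2] at h1
  have h3 : costCenters k f₂ μ2 =
      (1 / (Fintype.card X : ℝ)) * ∑ x, ⨅ j : Fin k, ‖f₂ x - μ2 j‖ ^ 2 := rfl
  have h4 : ∑ x, ‖f₂ x - μ2 (g x)‖ ^ 2 ≤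
      ∑ x, ((⨅ j : Fin k, ‖f₂ x - μ2 j‖ ^ 2) + 10 * ‖f₁ x - f₂ x‖) :=
    Finset.sum_le_sum fun x _ => key x
  rw [Finset.sum_add_distrib, ← Finset.mul_sum] at h4
  have h5 : dL1 f₁ f₂ = (1 / (Fintype.card X : ℝ)) * ∑ x, ‖f₁ x - f₂ x‖ := rfl
  rw [h3, h5]
  have hinv : (0:ℝ) ≤ 1 / (Fintype.card X : ℝ) := by positivity
  have h6 := mul_le_mul_of_nonneg_left h4 hinv
  rw [mul_add] at h6
  nlinarith [h6, h1]
end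
end

section
/- For any three k-clusterings P¹, P², P³ of a nonempty finite set X, the clustering difference satisfies the triangle inequality Δ_X(P¹, P³) ≤ Δ_X(P¹, P²) + Δ_X(P², P³). -/
open scoped BigOperators symmDiff

noncomputable section

variable {X : Type*} [Fintype X] [DecidableEq X] {n k : ℕ}

/-- the clustering difference `Δ_X` satisfies the triangle inequality. -/
theorem clusterDiff_triangle (X : Type*) [Fintype X] [DecidableEq X] [Nonempty X]
    (k : ℕ) (hk : 1 ≤ k) (P₁ P₂ P₃ : Fin k → Finset X)
    (h₁ : IsClustering k P₁) (h₂ : IsClustering k P₂) (h₃ : IsClustering k P₃) :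
    clusterDiff k P₁ P₃ ≤ clusterDiff k P₁ P₂ + clusterDiff k P₂ P₃ := by
  classical
  set c : ℝ := 1 / (Fintype.card X : ℝ) with hc
  have hc0 : 0 ≤ c := by positivity
  set u : Finset X := Finset.univ
  set F12 : Equiv.Perm (Fin k) → ℝ := fun σ =>
    c * ∑ i, (((P₁ i ∩ u) ∆ (P₂ (σ i) ∩ u)).card : ℝ) with hF12
  set F23 : Equiv.Perm (Fin k) → ℝ := fun σ =>
    c * ∑ i, (((P₂ i ∩ u) ∆ (P₃ (σ i) ∩ u)).card : ℝ) with hF23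
  set F13 : Equiv.Perm (Fin k) → ℝ := fun σ =>
    c * ∑ i, (((P₁ i ∩ u) ∆ (P₃ (σ i) ∩ u)).card : ℝ) with hF13
  obtain ⟨σ, hσ⟩ := Finite.exists_min F12
  obtain ⟨τ, hτ⟩ := Finite.exists_min F23
  have hbdd : ∀ G : Equiv.Perm (Fin k) → ℝ, BddBelow (Set.range G) := fun G =>
    (Set.finite_range G).bddBelow
  have h12 : clusterDiff k P₁ P₂ = F12 σ := by
    refine le_antisymm (ciInf_le (hbdd _) σ) (le_ciInf hσ)
  have h23 : clusterDiff k P₂ P₃ = F23 τ := by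
    refine le_antisymm (ciInf_le (hbdd _) τ) (le_ciInf hτ)
  have h13 : clusterDiff k P₁ P₃ ≤ F13 (σ.trans τ) := ciInf_le (hbdd _) _
  refine h13.trans ?_
  rw [h12, h23]
  have key : ∀ i, (((P₁ i ∩ u) ∆ (P₃ (τ (σ i)) ∩ u)).card : ℝ) ≤
      (((P₁ i ∩ u) ∆ (P₂ (σ i) ∩ u)).card : ℝ) +
      (((P₂ (σ i) ∩ u) ∆ (P₃ (τ (σ i)) ∩ u)).card : ℝ) := by
    intro i
    have hsub : (P₁ i ∩ u) ∆ (P₃ (τ (σ i)) ∩ u) ⊆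
        ((P₁ i ∩ u) ∆ (P₂ (σ i) ∩ u)) ∪ ((P₂ (σ i) ∩ u) ∆ (P₃ (τ (σ i)) ∩ u)) :=
      symmDiff_triangle _ _ _
    calc (((P₁ i ∩ u) ∆ (P₃ (τ (σ i)) ∩ u)).card : ℝ)
        ≤ ((((P₁ i ∩ u) ∆ (P₂ (σ i) ∩ u)) ∪ ((P₂ (σ i) ∩ u) ∆ (P₃ (τ (σ i)) ∩ u))).card : ℝ) := by
          exact_mod_cast Finset.card_le_card hsub
      _ ≤ _ := by exact_mod_cast Finset.card_union_le _ _
  have hsum : ∑ i, (((P₁ i ∩ u) ∆ (P₃ ((σ.trans τ) i) ∩ u)).card : ℝ) ≤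
      (∑ i, (((P₁ i ∩ u) ∆ (P₂ (σ i) ∩ u)).card : ℝ)) +
      ∑ i, (((P₂ i ∩ u) ∆ (P₃ (τ i) ∩ u)).card : ℝ) := by
    have := Equiv.sum_comp σ (fun j => (((P₂ j ∩ u) ∆ (P₃ (τ j) ∩ u)).card : ℝ))
    calc ∑ i, (((P₁ i ∩ u) ∆ (P₃ ((σ.trans τ) i) ∩ u)).card : ℝ)
        ≤ ∑ i, ((((P₁ i ∩ u) ∆ (P₂ (σ i) ∩ u)).card : ℝ) +
            (((P₂ (σ i) ∩ u) ∆ (P₃ (τ (σ i)) ∩ u)).card : ℝ)) :=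
          Finset.sum_le_sum fun i _ => key i
      _ = _ := by rw [Finset.sum_add_distrib, this]
  simp only [hF12, hF13, hF23]
  rw [← mul_add]
  exact mul_le_mul_of_nonneg_left hsum hc0
end
end
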